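/- Let k be a field of characteristic not equal to 2 in which every element has a square root. Then there does not exist a 2-step nilpotent Lie algebra over k that is minimally generated by 4 elements, has dimension 8, and has breadth type (0,3). -/

import Mathlib

/- Common definitions: breadth, breadth type, derived subalgebra, Camina Lie algebras,
nilpotency class, minimal generation, and free nilpotent Lie algebras. -/

open Module

section Defs

variable (k : Type*) [Field k]

/-- The breadth of an element `x` of a Lie algebra: the rank of the adjoint map `ad x`
(equivalently, the codimension of the centralizer of `x`). -/
noncomputable def breadth (L : Type*) [LieRing L] [LieAlgebra k L] (x : L) : ℕ :=
  Module.finrank k (LinearMap.range (LieAlgebra.ad k L x))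

/-- A Lie algebra has breadth type `S` if `S` is exactly the set of breadths of its elements. -/
def HasBreadthType (L : Type*) [LieRing L] [LieAlgebra k L] (S : Set ℕ) : Prop :=
  Set.range (breadth k L) = S

/-- The derived subalgebra `L' = [L, L]` as a Lie ideal. -/
abbrev derivedIdeal (L : Type*) [LieRing L] [LieAlgebra k L] : LieIdeal k L :=
  ⁅(⊤ : LieIdeal k L), (⊤ : LieIdeal k L)⁆

lemma lie_mem_derivedIdeal (L : Type*) [LieRing L] [LieAlgebra k L] (x y : L) :
    ⁅x, y⁆ ∈ derivedIdeal k L :=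
  LieSubmodule.lie_mem_lie (LieSubmodule.mem_top x) (LieSubmodule.mem_top y)

/-- A Camina Lie algebra: `[x, L] = L'` for every `x ∈ L \ L'`. -/
def IsCamina (L : Type*) [LieRing L] [LieAlgebra k L] : Prop :=
  ∀ x : L, x ∉ derivedIdeal k L →
    LinearMap.range (LieAlgebra.ad k L x) = (derivedIdeal k L).toSubmodule

/-- A Lie algebra is nilpotent of class exactly `c`. -/
def IsNilpotentOfClass (L : Type*) [LieRing L] [LieAlgebra k L] (c : ℕ) : Prop :=
  LieModule.lowerCentralSeries k L L c = ⊥ ∧ ∀ b < c, LieModule.lowerCentralSeries k L L b ≠ ⊥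

/-- A Lie algebra is minimally generated by `n` elements: some `n` elements generate it
and no fewer elements generate it. -/
def MinimallyGenerated (L : Type*) [LieRing L] [LieAlgebra k L] (n : ℕ) : Prop :=
  (∃ s : Finset L, s.card = n ∧ LieSubalgebra.lieSpan k L ↑s = ⊤) ∧
  ∀ s : Finset L, LieSubalgebra.lieSpan k L ↑s = ⊤ → n ≤ s.card

/-- The free `c`-step nilpotent Lie algebra on `n` generators: the quotient of the free
Lie algebra on `n` generators by the `(c+1)`-st term `γ_{c+1}` of its lower central series. -/
abbrev FreeNilp (c n : ℕ) :=
  FreeLieAlgebra k (Fin n) ⧸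
    LieModule.lowerCentralSeries k (FreeLieAlgebra k (Fin n)) (FreeLieAlgebra k (Fin n)) c

/-- The canonical generators of the free `c`-step nilpotent Lie algebra on `n` generators. -/
noncomputable def gen (c n : ℕ) (i : Fin n) : FreeNilp k c n :=
  LieSubmodule.Quotient.mk
    (N := LieModule.lowerCentralSeries k (FreeLieAlgebra k (Fin n)) (FreeLieAlgebra k (Fin n)) c)
    (FreeLieAlgebra.of k i)

end Defs

/-!
Let `L' = [L, L]`, which is central, and `V = L / L'`. Minimal generation by four elements
forces `dim V = 4`, hence `dim L' = 4`, and the bracket `Λ² V → L'` has a two-dimensional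
kernel. As every element of `k` is a square and `char k ≠ 2`, the Plücker quadric has a nonzero
point on this pencil, i.e. a decomposable kernel element `a ∧ b`: two commuting elements,
independent modulo `L'`. Then `ad a` kills `L'`, `a` and `b`, so `b(a) ≤ 2`, and the breadth
type forces `b(a) = 0`. But a central `a ∉ L'` leaves only the brackets of three basis vectors
to span `L'`, so `dim L' ≤ 3`.
-/

section Pluecker

section CommRing

variable {R : Type*} [CommRing R]

/-- The Plücker coordinates of `c ∧ d ∈ Λ² R⁴`, in the order `01, 02, 03, 12, 13, 23`. -/
def wedge4 : (Fin 4 → R) →ₗ[R] (Fin 4 → R) →ₗ[R] (Fin 6 → R) :=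
  LinearMap.mk₂ R
    (fun c d => ![c 0 * d 1 - c 1 * d 0, c 0 * d 2 - c 2 * d 0, c 0 * d 3 - c 3 * d 0,
      c 1 * d 2 - c 2 * d 1, c 1 * d 3 - c 3 * d 1, c 2 * d 3 - c 3 * d 2])
    (fun _ _ _ => by ext i; fin_cases i <;> simp <;> ring)
    (fun _ _ _ => by ext i; fin_cases i <;> simp <;> ring)
    (fun _ _ _ => by ext i; fin_cases i <;> simp <;> ring)
    (fun _ _ _ => by ext i; fin_cases i <;> simp <;> ring)

lemma wedge4_apply (c d : Fin 4 → R) :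
    wedge4 c d = ![c 0 * d 1 - c 1 * d 0, c 0 * d 2 - c 2 * d 0, c 0 * d 3 - c 3 * d 0,
      c 1 * d 2 - c 2 * d 1, c 1 * d 3 - c 3 * d 1, c 2 * d 3 - c 3 * d 2] := rfl

lemma wedge4_self (c : Fin 4 → R) : wedge4 c c = 0 := by
  ext i
  fin_cases i <;> simp [wedge4_apply] <;> ring

def pluecker (p : Fin 6 → R) : R := p 0 * p 5 - p 1 * p 4 + p 2 * p 3

end CommRing

variable {k : Type*} [Field k]

lemma linearIndependent_of_wedge4_ne_zero {c d : Fin 4 → k} (h : wedge4 c d ≠ 0) :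
    LinearIndependent k ![c, d] := by
  refine LinearIndependent.pair_iff.mpr fun s t hst => ⟨?_, ?_⟩
  · have : s • wedge4 c d = 0 := by
      rw [← LinearMap.map_smul₂, eq_neg_of_add_eq_zero_left hst]
      simp [wedge4_self]
    exact (smul_eq_zero.mp this).resolve_right h
  · have : t • wedge4 c d = 0 := by
      rw [← map_smul, eq_neg_of_add_eq_zero_right hst]
      simp [wedge4_self]
    exact (smul_eq_zero.mp this).resolve_right h

lemma ker_wedge4 {c : Fin 4 → k} (hc : c ≠ 0) : LinearMap.ker (wedge4 c) = k ∙ c := by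
  refine le_antisymm (fun d hd => ?_)
    ((Submodule.span_singleton_le_iff_mem _ _).mpr (wedge4_self c))
  obtain ⟨i, hi⟩ := Function.ne_iff.mp hc
  simp only [LinearMap.mem_ker, wedge4_apply, Matrix.cons_eq_zero_iff, sub_eq_zero] at hd
  obtain ⟨h01, h02, h03, h12, h13, h23, -⟩ := hd
  have key : ∀ j, c i * d j = c j * d i := by
    intro j
    fin_cases i <;> fin_cases j <;> grind
  refine Submodule.mem_span_singleton.mpr ⟨d i / c i, funext fun j => ?_⟩
  rw [Pi.smul_apply, smul_eq_mul, div_mul_eq_mul_div, div_eq_iff hi]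
  linear_combination (key j).symm

lemma finrank_range_wedge4 {c : Fin 4 → k} (hc : c ≠ 0) :
    finrank k (LinearMap.range (wedge4 c)) = 3 := by
  have := LinearMap.finrank_range_add_finrank_ker (wedge4 c)
  rw [ker_wedge4 hc, finrank_span_singleton hc, finrank_fin_fun] at this
  omega

lemma exists_wedge4_eq_of_pluecker_eq_zero {p : Fin 6 → k} (hp : pluecker p = 0) :
    ∃ c d, wedge4 c d = p := by
  by_cases hp0 : p = 0
  · exact ⟨0, 0, by simp [hp0]⟩
  obtain ⟨m, hm⟩ := Function.ne_iff.mp hp0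
  -- the rows `P i` of the skew-symmetric matrix of `p` satisfy `P i ∧ P j = p_ij • p`
  let P : Fin 4 → Fin 4 → k :=
    ![![0, p 0, p 1, p 2], ![-p 0, 0, p 3, p 4], ![-p 1, -p 3, 0, p 5], ![-p 2, -p 4, -p 5, 0]]
  let pair : Fin 6 → Fin 4 × Fin 4 := ![(0, 1), (0, 2), (0, 3), (1, 2), (1, 3), (2, 3)]
  have hP : wedge4 (P (pair m).1) (P (pair m).2) = p m • p := by
    unfold pluecker at hp
    fin_cases m <;> ext n <;> fin_cases n <;> simp [wedge4_apply, P, pair] <;>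
      first | ring1 | linear_combination hp | linear_combination -hp
  refine ⟨(p m)⁻¹ • P (pair m).1, P (pair m).2, ?_⟩
  rw [map_smul, LinearMap.smul_apply, hP, inv_smul_smul₀ hm]

lemma exists_ne_zero_binary_quadratic_eq_zero [NeZero (2 : k)] (hsq : ∀ a : k, IsSquare a)
    (a b c : k) : ∃ s t : k, (s ≠ 0 ∨ t ≠ 0) ∧ a * s ^ 2 + b * s * t + c * t ^ 2 = 0 := by
  by_cases ha : a = 0
  · exact ⟨1, 0, by simp [ha]⟩
  obtain ⟨s, hs⟩ := exists_quadratic_eq_zero ha (hsq (discrim a b c))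
  exact ⟨s, 1, by simp, by linear_combination hs⟩

lemma exists_ne_zero_pluecker_eq_zero [NeZero (2 : k)] (hsq : ∀ a : k, IsSquare a)
    {K : Submodule k (Fin 6 → k)} (hK : 2 ≤ finrank k K) :
    ∃ p ∈ K, p ≠ 0 ∧ pluecker p = 0 := by
  obtain ⟨p, hp⟩ := (finrank_pos_iff_exists_ne_zero (R := k) (M := K)).mp (by omega)
  obtain ⟨q, hpq⟩ := exists_linearIndependent_pair_of_one_lt_finrank (R := k) (by omega) hp
  obtain ⟨s, t, hst, h⟩ := exists_ne_zero_binary_quadratic_eq_zero hsq (pluecker (p : Fin 6 → k))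
    (p.1 0 * q.1 5 + p.1 5 * q.1 0 - p.1 1 * q.1 4 - p.1 4 * q.1 1 + p.1 2 * q.1 3 + p.1 3 * q.1 2)
    (pluecker (q : Fin 6 → k))
  refine ⟨(s • p + t • q : K), (s • p + t • q : K).2, ?_, ?_⟩
  · rw [Ne, ZeroMemClass.coe_eq_zero]
    intro h0
    have := LinearIndependent.pair_iff.mp hpq s t h0
    tauto
  · simp only [pluecker, Submodule.coe_add, Submodule.coe_smul, Pi.add_apply, Pi.smul_apply,
      smul_eq_mul] at h ⊢
    linear_combination h

end Pluecker

section LiftBasis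

variable {k M : Type*} [Field k] [AddCommGroup M] [Module k M]

lemma exists_bijective_mkQ_comp_linearCombination (D : Submodule k M)
    [FiniteDimensional k (M ⧸ D)] {n : ℕ} (hn : finrank k (M ⧸ D) = n) :
    ∃ x : Fin n → M, Function.Bijective (D.mkQ ∘ₗ Fintype.linearCombination k x) := by
  let e := (finBasis k (M ⧸ D)).reindex (finCongr hn)
  choose x hx using fun i => D.mkQ_surjective (e i)
  refine ⟨x, ?_⟩
  convert e.equivFun.symm.bijective
  ext c
  simp [Fintype.linearCombination_apply, hx, Basis.equivFun_symm_apply]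

lemma span_range_sup_eq_top_of_surjective {D : Submodule k M} {n : ℕ} {x : Fin n → M}
    (hx : Function.Surjective (D.mkQ ∘ₗ Fintype.linearCombination k x)) :
    Submodule.span k (Set.range x) ⊔ D = ⊤ := by
  rw [sup_comm, ← Submodule.map_mkQ_eq_top, ← Fintype.range_linearCombination,
    ← LinearMap.range_comp, LinearMap.range_eq_top.mpr hx]

end LiftBasis

section TwoStep

variable {k : Type*} [Field k] {L : Type*} [LieRing L] [LieAlgebra k L]

lemma lie_eq_zero_of_mem_derivedIdeal (hL : LieModule.lowerCentralSeries k L L 2 = ⊥) (x : L)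
    {u : L} (hu : u ∈ derivedIdeal k L) : ⁅x, u⁆ = 0 := by
  have hmem : ⁅x, u⁆ ∈ LieModule.lowerCentralSeries k L L 2 :=
    LieSubmodule.lie_mem_lie (LieSubmodule.mem_top x) (by simpa using hu)
  rwa [hL, LieSubmodule.mem_bot] at hmem

lemma lie_eq_lie_of_sub_mem_derivedIdeal (hL : LieModule.lowerCentralSeries k L L 2 = ⊥)
    {u u' w w' : L} (hu : u - u' ∈ derivedIdeal k L) (hw : w - w' ∈ derivedIdeal k L) :
    ⁅u, w⁆ = ⁅u', w'⁆ := by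
  have h₁ : ⁅u - u', w⁆ = 0 := by
    rw [← lie_skew, lie_eq_zero_of_mem_derivedIdeal hL w hu, neg_zero]
  calc ⁅u, w⁆ = ⁅u - u', w⁆ + ⁅u', w - w'⁆ + ⁅u', w'⁆ := by rw [sub_lie, lie_sub]; abel
    _ = ⁅u', w'⁆ := by rw [h₁, lie_eq_zero_of_mem_derivedIdeal hL u' hw, zero_add, zero_add]

lemma breadth_eq_zero_iff [FiniteDimensional k L] {a : L} :
    breadth k L a = 0 ↔ ∀ y : L, ⁅a, y⁆ = 0 := by
  rw [breadth, Submodule.finrank_eq_zero, LinearMap.range_eq_bot, LinearMap.ext_iff]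
  rfl

lemma span_sup_derivedIdeal_eq_top_of_lieSpan_eq_top {s : Set L}
    (hs : LieSubalgebra.lieSpan k L s = ⊤) :
    Submodule.span k s ⊔ (derivedIdeal k L).toSubmodule = ⊤ := by
  let A : LieSubalgebra k L :=
    { toSubmodule := Submodule.span k s ⊔ (derivedIdeal k L).toSubmodule
      lie_mem' := fun _ _ => Submodule.mem_sup_right (lie_mem_derivedIdeal k L _ _) }
  have hA : LieSubalgebra.lieSpan k L s ≤ A :=
    LieSubalgebra.lieSpan_le.mpr fun _ hz => Submodule.mem_sup_left (Submodule.subset_span hz)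
  rw [hs, top_le_iff] at hA
  exact congrArg LieSubalgebra.toSubmodule hA

lemma derivedIdeal_eq_span_image2_lie (hL : LieModule.lowerCentralSeries k L L 2 = ⊥)
    {s : Set L} (hs : Submodule.span k s ⊔ (derivedIdeal k L).toSubmodule = ⊤) :
    (derivedIdeal k L).toSubmodule = Submodule.span k (Set.image2 (⁅·, ·⁆) s s) := by
  have hlift : ∀ u : L, ∃ u' ∈ Submodule.span k s, u - u' ∈ derivedIdeal k L := fun u => by
    obtain ⟨u', hu', d, hd, rfl⟩ := Submodule.mem_sup.mp (hs ▸ Submodule.mem_top : u ∈ _)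
    exact ⟨u', hu', by simpa using hd⟩
  refine le_antisymm ?_ (Submodule.span_le.mpr ?_)
  · rw [LieSubmodule.lieIdeal_oper_eq_linear_span, Submodule.span_le]
    rintro _ ⟨⟨u, -⟩, ⟨w, -⟩, rfl⟩
    obtain ⟨u', hu', hu⟩ := hlift u
    obtain ⟨w', hw', hw⟩ := hlift w
    rw [SetLike.mem_coe, lie_eq_lie_of_sub_mem_derivedIdeal hL hu hw]
    have := Submodule.apply_mem_map₂ (LieAlgebra.ad k L : L →ₗ[k] Module.End k L) hu' hw'
    rwa [Submodule.map₂_span_span] at this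
  · rintro _ ⟨a, -, b, -, rfl⟩
    exact lie_mem_derivedIdeal k L a b

lemma lieSpan_eq_top_of_span_sup_derivedIdeal_eq_top
    (hL : LieModule.lowerCentralSeries k L L 2 = ⊥) {s : Set L}
    (hs : Submodule.span k s ⊔ (derivedIdeal k L).toSubmodule = ⊤) :
    LieSubalgebra.lieSpan k L s = ⊤ := by
  have h₁ : Submodule.span k s ≤ (LieSubalgebra.lieSpan k L s).toSubmodule :=
    Submodule.span_le.mpr LieSubalgebra.subset_lieSpan
  have h₂ : (derivedIdeal k L).toSubmodule ≤ (LieSubalgebra.lieSpan k L s).toSubmodule := by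
    rw [derivedIdeal_eq_span_image2_lie hL hs, Submodule.span_le]
    rintro _ ⟨a, ha, b, hb, rfl⟩
    exact (LieSubalgebra.lieSpan k L s).lie_mem (LieSubalgebra.subset_lieSpan ha)
      (LieSubalgebra.subset_lieSpan hb)
  rw [← LieSubalgebra.toSubmodule_inj, LieSubalgebra.top_toSubmodule, eq_top_iff, ← hs]
  exact sup_le h₁ h₂

lemma MinimallyGenerated.finrank_quotient_derivedIdeal [FiniteDimensional k L]
    (hL : LieModule.lowerCentralSeries k L L 2 = ⊥) {n : ℕ} (h : MinimallyGenerated k L n) :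
    finrank k (L ⧸ (derivedIdeal k L).toSubmodule) = n := by
  classical
  set D := (derivedIdeal k L).toSubmodule
  have hgen : ∀ s : Finset L,
      LieSubalgebra.lieSpan k L s = ⊤ ↔ Submodule.span k (s.image D.mkQ : Set (L ⧸ D)) = ⊤ := by
    intro s
    rw [Finset.coe_image, ← Submodule.map_span, Submodule.map_mkQ_eq_top, sup_comm]
    exact ⟨span_sup_derivedIdeal_eq_top_of_lieSpan_eq_top,
      lieSpan_eq_top_of_span_sup_derivedIdeal_eq_top hL⟩
  apply le_antisymm
  · obtain ⟨s, hcard, hs⟩ := h.1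
    calc finrank k (L ⧸ D) = finrank k (Submodule.span k (s.image D.mkQ : Set (L ⧸ D))) := by
          rw [(hgen s).mp hs, finrank_top]
      _ ≤ (s.image D.mkQ).card := finrank_span_finset_le_card _
      _ ≤ n := hcard ▸ Finset.card_image_le
  · let e := finBasis k (L ⧸ D)
    choose x hx using fun i => D.mkQ_surjective (e i)
    have hspan : Submodule.span k ((Finset.univ.image x).image D.mkQ : Set (L ⧸ D)) = ⊤ := by
      rw [Finset.image_image, Finset.coe_image, Finset.coe_univ, Set.image_univ,
        show D.mkQ ∘ x = e from funext hx, e.span_eq]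
    calc n ≤ (Finset.univ.image x).card := h.2 _ ((hgen _).mpr hspan)
      _ ≤ finrank k (L ⧸ D) := Finset.card_image_le.trans (by simp)

lemma breadth_add_two_le [FiniteDimensional k L] (hL : LieModule.lowerCentralSeries k L L 2 = ⊥)
    {a b : L} (hab : ⁅a, b⁆ = 0)
    (hind : LinearIndependent k ![(derivedIdeal k L).toSubmodule.mkQ a,
      (derivedIdeal k L).toSubmodule.mkQ b]) :
    breadth k L a + 2 ≤ finrank k (L ⧸ (derivedIdeal k L).toSubmodule) := by
  set D := (derivedIdeal k L).toSubmodule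
  let g := D.liftQ (LieAlgebra.ad k L a) fun u hu => lie_eq_zero_of_mem_derivedIdeal hL a hu
  have hker : Submodule.span k (Set.range ![D.mkQ a, D.mkQ b]) ≤ LinearMap.ker g := by
    rw [Submodule.span_le]
    rintro _ ⟨i, rfl⟩
    fin_cases i
    exacts [lie_self a, hab]
  have hrank := g.finrank_range_add_finrank_ker
  have hle := Submodule.finrank_mono hker
  rw [show LinearMap.range g = _ from D.range_liftQ _ _] at hrank
  rw [finrank_span_eq_card hind, Fintype.card_fin] at hle
  rw [breadth]
  omega

end TwoStep

section Coordinates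

section CommRing

variable {R : Type*} [CommRing R] {L : Type*} [LieRing L] [LieAlgebra R L]

variable (R) in
/-- The linear map `Λ² R⁴ → L`, in the coordinates of `wedge4`, sending `e_i ∧ e_j` to
`⁅x i, x j⁆`. -/
def lieWedge (x : Fin 4 → L) : (Fin 6 → R) →ₗ[R] L :=
  Fintype.linearCombination R
    ![⁅x 0, x 1⁆, ⁅x 0, x 2⁆, ⁅x 0, x 3⁆, ⁅x 1, x 2⁆, ⁅x 1, x 3⁆, ⁅x 2, x 3⁆]

lemma lieWedge_wedge4 (x : Fin 4 → L) (c d : Fin 4 → R) :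
    lieWedge R x (wedge4 c d) =
      ⁅Fintype.linearCombination R x c, Fintype.linearCombination R x d⁆ := by
  have hskew : ∀ i j, ⁅x j, x i⁆ = -⁅x i, x j⁆ := fun i j => (lie_skew _ _).symm
  simp only [lieWedge, wedge4_apply, Fintype.linearCombination_apply, Fin.sum_univ_four,
    Fin.sum_univ_six, add_lie, lie_add, smul_lie, lie_smul, lie_self, smul_zero, add_zero,
    zero_add, hskew 0 1, hskew 0 2, hskew 0 3, hskew 1 2, hskew 1 3, hskew 2 3, Matrix.cons_val]
  module

end CommRing

variable {k : Type*} [Field k] {L : Type*} [LieRing L] [LieAlgebra k L]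

lemma range_lieWedge (hL : LieModule.lowerCentralSeries k L L 2 = ⊥) {x : Fin 4 → L}
    (hx : Submodule.span k (Set.range x) ⊔ (derivedIdeal k L).toSubmodule = ⊤) :
    LinearMap.range (lieWedge k x) = (derivedIdeal k L).toSubmodule := by
  classical
  apply le_antisymm
  · rw [lieWedge, Fintype.range_linearCombination, Submodule.span_le]
    rintro _ ⟨m, rfl⟩
    fin_cases m <;> exact lie_mem_derivedIdeal k L _ _
  · rw [derivedIdeal_eq_span_image2_lie hL hx, Submodule.span_le]
    rintro _ ⟨_, ⟨i, rfl⟩, _, ⟨j, rfl⟩, rfl⟩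
    refine ⟨wedge4 (Pi.single i 1) (Pi.single j 1), ?_⟩
    simp only [lieWedge_wedge4, Fintype.linearCombination_apply_single, one_smul]

lemma exists_lie_eq_zero_linearIndependent [NeZero (2 : k)] (hsq : ∀ a : k, IsSquare a)
    [FiniteDimensional k L] (hL : LieModule.lowerCentralSeries k L L 2 = ⊥)
    (hV : finrank k (L ⧸ (derivedIdeal k L).toSubmodule) = 4)
    (hD : finrank k (derivedIdeal k L).toSubmodule = 4) :
    ∃ a b : L, ⁅a, b⁆ = 0 ∧ LinearIndependent k
      ![(derivedIdeal k L).toSubmodule.mkQ a, (derivedIdeal k L).toSubmodule.mkQ b] := by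
  obtain ⟨x, hx⟩ := exists_bijective_mkQ_comp_linearCombination _ hV
  have hker : finrank k (LinearMap.ker (lieWedge k x)) = 2 := by
    have := (lieWedge k x).finrank_range_add_finrank_ker
    rw [range_lieWedge hL (span_range_sup_eq_top_of_surjective hx.2), finrank_fin_fun] at this
    omega
  obtain ⟨_, hp, hp0, hpl⟩ := exists_ne_zero_pluecker_eq_zero hsq hker.ge
  obtain ⟨c, d, rfl⟩ := exists_wedge4_eq_of_pluecker_eq_zero hpl
  refine ⟨_, _, (lieWedge_wedge4 x c d).symm.trans hp, ?_⟩
  have hind := (linearIndependent_of_wedge4_ne_zero hp0).map' _ (LinearMap.ker_eq_bot.mpr hx.1)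
  rw [← FinVec.map_eq] at hind
  exact hind

lemma finrank_derivedIdeal_le_three [FiniteDimensional k L]
    (hL : LieModule.lowerCentralSeries k L L 2 = ⊥)
    (hV : finrank k (L ⧸ (derivedIdeal k L).toSubmodule) = 4) {a : L}
    (ha : a ∉ derivedIdeal k L) (hcen : ∀ y : L, ⁅a, y⁆ = 0) :
    finrank k (derivedIdeal k L).toSubmodule ≤ 3 := by
  obtain ⟨x, hx⟩ := exists_bijective_mkQ_comp_linearCombination _ hV
  obtain ⟨c, hc⟩ := hx.2 ((derivedIdeal k L).toSubmodule.mkQ a)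
  have hsub : Fintype.linearCombination k x c - a ∈ derivedIdeal k L :=
    (Submodule.Quotient.eq _).mp hc
  have hc0 : c ≠ 0 := by
    rintro rfl
    exact ha (by simpa using hsub)
  have hle : LinearMap.range (wedge4 c) ≤ LinearMap.ker (lieWedge k x) := by
    rintro _ ⟨d, rfl⟩
    rw [LinearMap.mem_ker, lieWedge_wedge4,
      lie_eq_lie_of_sub_mem_derivedIdeal hL hsub (by rw [sub_self]; exact zero_mem _), hcen]
  have := (lieWedge k x).finrank_range_add_finrank_ker
  rw [range_lieWedge hL (span_range_sup_eq_top_of_surjective hx.2), finrank_fin_fun] at this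
  have := Submodule.finrank_mono hle
  rw [finrank_range_wedge4 hc0] at this
  omega

end Coordinates

/-- over a field of characteristic `≠ 2` in which every element is a square,
there is no 2-step nilpotent Lie algebra of dimension 8, minimally generated by 4 elements,
of breadth type `(0,3)`. -/
theorem no_dim_eight_breadth_type_zero_three
    (k : Type*) [Field k] (hchar : ringChar k ≠ 2) (hsq : ∀ a : k, IsSquare a) :
    ∀ (L : Type*) [LieRing L] [LieAlgebra k L],
      IsNilpotentOfClass k L 2 → MinimallyGenerated k L 4 → finrank k L = 8 →
      ¬ HasBreadthType k L {0, 3} := by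
  intro L _ _ hnil hmin hdim hbt
  have : NeZero (2 : k) := ⟨Ring.two_ne_zero hchar⟩
  have : FiniteDimensional k L := .of_finrank_pos (by omega)
  have hL := hnil.1
  have hV := hmin.finrank_quotient_derivedIdeal hL
  have hD : finrank k (derivedIdeal k L).toSubmodule = 4 := by
    have := (derivedIdeal k L).toSubmodule.finrank_quotient_add_finrank
    omega
  obtain ⟨a, b, hab, hind⟩ := exists_lie_eq_zero_linearIndependent hsq hL hV hD
  have hbreadth : breadth k L a ∈ ({0, 3} : Set ℕ) := hbt ▸ Set.mem_range_self a
  have hcen : ∀ y : L, ⁅a, y⁆ = 0 := by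
    refine (breadth_eq_zero_iff (k := k)).mp ?_
    have := breadth_add_two_le hL hab hind
    simp only [Set.mem_insert_iff, Set.mem_singleton_iff] at hbreadth
    omega
  have ha : a ∉ derivedIdeal k L := fun h =>
    hind.ne_zero 0 ((Submodule.Quotient.mk_eq_zero _).mpr h)
  have := finrank_derivedIdeal_le_three hL hV ha hcen
  omega
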